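/- arXiv:2205.07270 — 2 statements merged into one kernel-verified Lean document; each statement's English description precedes it below -/
import Mathlib

section
/- For any $\gamma > -3$ and any $\delta > 0$, there exists a constant $C > 0$ such that for all $v \in \mathbb{R}^3$, $\int_{\mathbb{R}^3} |v-w|^\gamma e^{-\delta |w|^2}\, dw \le C \langle v\rangle^\gamma$, where $\langle v\rangle = (1+|v|^2)^{1/2}$. -/
noncomputable section

open MeasureTheory Real

abbrev V3 : Type := Fin 3 → ℝ

/-- squared Euclidean norm on `ℝ³` -/
def en2 (v : V3) : ℝ := ∑ i, (v i) ^ 2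

/-- Euclidean norm on `ℝ³` -/
def en (v : V3) : ℝ := Real.sqrt (en2 v)

/-- Japanese bracket `⟨v⟩ = (1+|v|²)^{1/2}` -/
def jap (v : V3) : ℝ := Real.sqrt (1 + en2 v)

/-- partial derivative `∂ᵢ` -/
def pd (i : Fin 3) (f : V3 → ℝ) : V3 → ℝ := fun v => fderiv ℝ f v (Pi.single i 1)

/-- multi-index derivative `∂^α` -/
def pdm (α : Fin 3 → ℕ) (f : V3 → ℝ) : V3 → ℝ :=
  (pd 0)^[α 0] ((pd 1)^[α 1] ((pd 2)^[α 2] f))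

/-- length `|α|` of a multi-index -/
def mdeg (α : Fin 3 → ℕ) : ℕ := ∑ i, α i

/-- factorial `α!` of a multi-index -/
def mfact (α : Fin 3 → ℕ) : ℕ := ∏ i, Nat.factorial (α i)

/-- binomial coefficient of multi-indices -/
def mchoose (α β : Fin 3 → ℕ) : ℕ := ∏ i, Nat.choose (α i) (β i)

/-- Maxwellian distribution `μ` -/
def maxw (v : V3) : ℝ := (2 * π) ^ (-(3 : ℝ) / 2) * Real.exp (-en2 v / 2)

/-- kernel coefficients `aᵢⱼ(v) = (δᵢⱼ|v|² - vᵢvⱼ)|v|^γ` -/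
def aK (γ : ℝ) (i j : Fin 3) (v : V3) : ℝ :=
  ((if i = j then en2 v else 0) - v i * v j) * en v ^ γ

/-- convolution on `ℝ³` -/
def conv (f g : V3 → ℝ) (v : V3) : ℝ := ∫ w, f (v - w) * g w

/-- `ā_{ij} = a_{ij} * μ` -/
def abar (γ : ℝ) (i j : Fin 3) : V3 → ℝ := conv (aK γ i j) maxw

/-- weighted L² norm `‖⟨v⟩^θ f‖_{L²}` -/
def wnorm (θ : ℝ) (f : V3 → ℝ) : ℝ := Real.sqrt (∫ v, jap v ^ (2 * θ) * (f v) ^ 2)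

/-- L² norm -/
def L2norm (f : V3 → ℝ) : ℝ := Real.sqrt (∫ v, (f v) ^ 2)

/-- weighted anisotropic norm squared `‖u‖²_{A,θ}` -/
def AnormSq (γ θ : ℝ) (u : V3 → ℝ) : ℝ :=
  ∑ j, ∑ k, ∫ v, jap v ^ (2 * θ) *
    (abar γ j k v * pd j u v * pd k u v + (1 / 4) * abar γ j k v * v j * v k * (u v) ^ 2)

/-- weighted anisotropic norm `‖u‖_{A,θ}` -/
def Anorm (γ θ : ℝ) (u : V3 → ℝ) : ℝ := Real.sqrt (AnormSq γ θ u)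

/-- the linear Landau operator
`ℒf = ∇·[A∇f] - (A v/2 · v/2) f + ∇·[A v/2] f` -/
def Lop (γ : ℝ) (f : V3 → ℝ) (v : V3) : ℝ :=
  (∑ i, ∑ j, pd i (fun w => abar γ i j w * pd j f w) v)
    - (1 / 4) * (∑ i, ∑ j, abar γ i j v * v i * v j) * f v
    + (1 / 2) * (∑ i, ∑ j, pd i (fun w => abar γ i j w * w j) v) * f v

/-- weak solution of `∂ₜ f = ℒ f`, `f|_{t=0} = f₀`, tested against smooth
Schwartz-valued test functions vanishing at `t = T` -/
def IsWeakSol (γ T : ℝ) (f0 : V3 → ℝ) (f : ℝ → V3 → ℝ) : Prop :=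
  ∀ φ : ℝ → SchwartzMap V3 ℝ,
    ContDiff ℝ (⊤ : ℕ∞) (fun p : ℝ × V3 => φ p.1 p.2) →
    φ T = 0 →
    (∫ t in (0 : ℝ)..T, ∫ v, f t v *
        (deriv (fun s => φ s v) t + Lop γ (fun w => φ t w) v))
      + (∫ v, f0 v * φ 0 v) = 0

/-- membership in `L^∞([0,T]; L²(ℝ³))` -/
def InLinfL2 (T : ℝ) (f : ℝ → V3 → ℝ) : Prop :=
  (∀ t ∈ Set.Icc (0 : ℝ) T, MemLp (f t) 2 volume) ∧
  ∃ M : ℝ, ∀ t ∈ Set.Icc (0 : ℝ) T, eLpNorm (f t) 2 volume ≤ ENNReal.ofReal M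



open Metric Set

abbrev E3 : Type := EuclideanSpace ℝ (Fin 3)

set_option maxHeartbeats 1000000 in

lemma pow_rpow_comm (x:ℝ) (hx: 0 ≤ x) (n:ℕ) (γ:ℝ): (x^n)^γ = (x^γ)^n := by
  rw [← Real.rpow_natCast x n, ← Real.rpow_mul hx, mul_comm, Real.rpow_mul hx, Real.rpow_natCast]

lemma intOn_ball (γ : ℝ) (hγ : -3 < γ) (hγ0 : γ < 0) (R : ℝ) (hR : 0 < R) :
    IntegrableOn (fun x : E3 => ‖x‖ ^ γ) (ball 0 R) := by
  have hmeas : Measurable (fun x : E3 => ‖x‖ ^ γ) := by fun_prop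
  refine ⟨hmeas.aestronglyMeasurable.restrict, ?_⟩
  rw [hasFiniteIntegral_iff_norm]
  set S : ℕ → Set E3 := fun n => {x | R * (1/2)^(n+1) ≤ ‖x‖ ∧ ‖x‖ < R * (1/2)^n} with hS
  have hSm : ∀ n, MeasurableSet (S n) := by
    intro n
    exact (measurable_norm (measurableSet_Ici)).inter (measurable_norm (measurableSet_Iio))
  have hcover : ball (0:E3) R ⊆ {0} ∪ ⋃ n, S n := by
    intro x hx
    rcases eq_or_ne x 0 with h | h
    · exact Or.inl h
    · refine Or.inr ?_
      have hxpos : 0 < ‖x‖ := norm_pos_iff.2 h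
      have hxR : ‖x‖ < R := by simpa using mem_ball_zero_iff.1 hx
      have hex : ∃ n : ℕ, R * (1/2)^(n+1) ≤ ‖x‖ := by
        obtain ⟨n, hn⟩ := pow_unbounded_of_one_lt (R / ‖x‖) one_lt_two
        refine ⟨n, ?_⟩
        have h2 : R < ‖x‖ * 2 ^ n := by
          rw [div_lt_iff₀ hxpos] at hn; linarith [hn]
        have h3 : R * (1/2)^(n+1) ≤ R * (1/2)^n := by
          apply mul_le_mul_of_nonneg_left _ hR.le
          apply pow_le_pow_of_le_one (by norm_num) (by norm_num) (Nat.le_succ n)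
        refine h3.trans ?_
        rw [one_div, inv_pow, mul_inv_le_iff₀' (by positivity)]
        linarith
      set n := Nat.find hex with hn
      refine mem_iUnion.2 ⟨n, Nat.find_spec hex, ?_⟩
      rcases Nat.eq_zero_or_pos n with h0 | h0
      · rw [h0]; simpa using hxR
      · have h4 := Nat.find_min hex (m := n - 1) (by omega)
        push_neg at h4
        have h5 : n - 1 + 1 = n := by omega
        rwa [h5] at h4
  have hq1 : ((1/2:ℝ))^(γ+3) < 1 := Real.rpow_lt_one (by norm_num) (by norm_num) (by linarith)
  have hq0 : (0:ℝ) ≤ ((1/2:ℝ))^(γ+3) := by positivity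
  set c : ℝ := R^γ * ((1/2:ℝ)^γ) * R^3 with hc
  have hc0 : 0 ≤ c := by positivity
  calc ∫⁻ a in ball 0 R, ENNReal.ofReal ‖‖a‖ ^ γ‖
      ≤ ∫⁻ a in {0} ∪ ⋃ n, S n, ENNReal.ofReal ‖‖a‖ ^ γ‖ := lintegral_mono_set hcover
    _ ≤ (∫⁻ a in {(0:E3)}, ENNReal.ofReal ‖‖a‖ ^ γ‖) + ∫⁻ a in ⋃ n, S n, ENNReal.ofReal ‖‖a‖ ^ γ‖ :=
        lintegral_union_le _ _ _
    _ ≤ 0 + ∑' n, ∫⁻ a in S n, ENNReal.ofReal ‖‖a‖ ^ γ‖ := by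
        gcongr
        · rw [lintegral_singleton]
          simp [Real.zero_rpow hγ0.ne]
        · exact lintegral_iUnion_le _ _
    _ < ⊤ := by
        rw [zero_add]
        have hterm : ∀ n : ℕ, ∫⁻ a in S n, ENNReal.ofReal ‖‖a‖ ^ γ‖
            ≤ (ENNReal.ofReal c * volume (ball (0:E3) 1)) * (ENNReal.ofReal ((1/2:ℝ)^(γ+3)))^n := by
          intro n
          have h1 : ∫⁻ a in S n, ENNReal.ofReal ‖‖a‖ ^ γ‖
              ≤ ∫⁻ _ in S n, ENNReal.ofReal ((R * (1/2)^(n+1)) ^ γ) := by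
            apply setLIntegral_mono' (hSm n)
            intro x hx
            apply ENNReal.ofReal_le_ofReal
            rw [Real.norm_of_nonneg (by positivity)]
            exact Real.rpow_le_rpow_of_nonpos (by positivity) hx.1 hγ0.le
          refine h1.trans ?_
          rw [setLIntegral_const]
          have h2 : volume (S n) ≤ ENNReal.ofReal ((R * (1/2)^n)^3) * volume (ball (0:E3) 1) := by
            have hsub : S n ⊆ ball 0 (R * (1/2)^n) := fun x hx => mem_ball_zero_iff.2 hx.2
            refine (measure_mono hsub).trans_eq ?_
            rw [Measure.addHaar_ball _ _ (by positivity), finrank_euclideanSpace]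
            norm_num
          have key : (R * (1/2)^(n+1)) ^ γ * (R * (1/2)^n)^3 = c * ((1/2:ℝ)^(γ+3))^n := by
            have e1 : ((1/2:ℝ))^(γ+3) = (1/2:ℝ)^γ * (1/2:ℝ)^(3:ℕ) := by
              rw [Real.rpow_add (by norm_num)]
              congr 1
              rw [show (3:ℝ) = ((3:ℕ):ℝ) by norm_num, Real.rpow_natCast]
            have e2 : ((1/2:ℝ)^(n:ℕ))^(3:ℕ) = (((1/2:ℝ))^(3:ℕ))^n := by
              rw [← pow_mul, ← pow_mul, Nat.mul_comm]
            rw [e1, Real.mul_rpow hR.le (by positivity), pow_rpow_comm (1/2:ℝ) (by norm_num),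
              mul_pow, e2, hc, pow_succ, mul_pow]
            ring
          calc ENNReal.ofReal ((R * (1/2)^(n+1)) ^ γ) * volume (S n)
              ≤ ENNReal.ofReal ((R * (1/2)^(n+1)) ^ γ) * (ENNReal.ofReal ((R * (1/2)^n)^3) * volume (ball (0:E3) 1)) := by gcongr
            _ = ENNReal.ofReal (c * ((1/2:ℝ)^(γ+3))^n) * volume (ball (0:E3) 1) := by
                rw [← mul_assoc, ← ENNReal.ofReal_mul (by positivity), key]
            _ = _ := by
                rw [ENNReal.ofReal_mul hc0, ENNReal.ofReal_pow hq0]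
                ring
        calc ∑' n, ∫⁻ a in S n, ENNReal.ofReal ‖‖a‖ ^ γ‖
            ≤ ∑' n : ℕ, (ENNReal.ofReal c * volume (ball (0:E3) 1)) * (ENNReal.ofReal ((1/2:ℝ)^(γ+3)))^n :=
              ENNReal.tsum_le_tsum hterm
          _ = (ENNReal.ofReal c * volume (ball (0:E3) 1)) * (1 - ENNReal.ofReal ((1/2:ℝ)^(γ+3)))⁻¹ := by
              rw [ENNReal.tsum_mul_left, ENNReal.tsum_geometric]
          _ < ⊤ := by
              apply ENNReal.mul_lt_top
              · exact ENNReal.mul_lt_top ENNReal.ofReal_lt_top measure_ball_lt_top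
              · rw [ENNReal.inv_lt_top]
                exact tsub_pos_of_lt (ENNReal.ofReal_lt_one.2 hq1)

lemma gauss_int (b : ℝ) (hb : 0 < b) : Integrable (fun w : E3 => Real.exp (-b * ‖w‖^2)) := by
  have h := GaussianFourier.integrable_cexp_neg_mul_sq_norm_add (V := E3) (b := (b:ℂ)) (by simpa using hb) 0 0
  have h2 := h.norm
  simp only [Complex.norm_exp, zero_mul, add_zero] at h2
  convert h2 using 2 with w
  norm_cast

lemma poly_exp (δ : ℝ) (hδ : 0 < δ) (t : ℝ) (ht : 0 ≤ t) :
    (1+t)^(3:ℕ) * Real.exp (-(δ/4)*t) ≤ ((min 1 (δ/12))⁻¹)^3 := by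
  set m := min 1 (δ/12) with hm
  have hm0 : 0 < m := lt_min one_pos (by positivity)
  have h1 : m * (1+t) ≤ Real.exp ((δ/12)*t) := by
    have h := Real.add_one_le_exp ((δ/12)*t)
    have hm1 : m ≤ 1 := min_le_left _ _
    have hm2 : m ≤ δ/12 := min_le_right _ _
    nlinarith
  have h2 : 1 + t ≤ m⁻¹ * Real.exp ((δ/12)*t) := by
    rw [inv_mul_eq_div, le_div_iff₀ hm0, mul_comm]
    exact h1
  calc (1+t)^(3:ℕ) * Real.exp (-(δ/4)*t)
      ≤ (m⁻¹ * Real.exp ((δ/12)*t))^(3:ℕ) * Real.exp (-(δ/4)*t) := by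
        apply mul_le_mul_of_nonneg_right _ (Real.exp_pos _).le
        exact pow_le_pow_left₀ (by positivity) h2 3
    _ = (m⁻¹)^3 * (Real.exp ((δ/12)*t) * Real.exp ((δ/12)*t) * Real.exp ((δ/12)*t) * Real.exp (-(δ/4)*t)) := by
        ring
    _ = (m⁻¹)^3 := by
        rw [← Real.exp_add, ← Real.exp_add, ← Real.exp_add,
          show (δ/12)*t + (δ/12)*t + (δ/12)*t + -(δ/4)*t = 0 by ring, Real.exp_zero, mul_one]

lemma key_nonneg (γ : ℝ) (hγ0 : 0 ≤ γ) (δ : ℝ) (hδ : 0 < δ) :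
    ∃ C > (0:ℝ), ∀ v : E3,
      (∫ w, ‖v - w‖ ^ γ * Real.exp (-δ * ‖w‖^2)) ≤ C * Real.sqrt (1 + ‖v‖^2) ^ γ := by
  set I2 : ℝ := ∫ w : E3, Real.exp (-(δ/2) * ‖w‖^2) with hI2
  have hI2int : Integrable (fun w : E3 => Real.exp (-(δ/2) * ‖w‖^2)) := gauss_int _ (half_pos hδ)
  have hI20 : 0 ≤ I2 := integral_nonneg fun w => (Real.exp_pos _).le
  refine ⟨max 1 (Real.exp (γ^2/(2*δ)) * I2), lt_of_lt_of_le one_pos (le_max_left _ _), fun v => ?_⟩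
  set J : ℝ := Real.sqrt (1 + ‖v‖^2) with hJ
  have hJ1 : 1 ≤ J := by
    rw [hJ]
    rw [show (1:ℝ) ≤ √(1 + ‖v‖ ^ 2) ↔ Real.sqrt 1 ≤ √(1 + ‖v‖ ^ 2) by rw [Real.sqrt_one]]
    exact Real.sqrt_le_sqrt (by nlinarith [sq_nonneg ‖v‖])
  have hJv : ‖v‖ ≤ J := by
    have h := Real.sqrt_le_sqrt (show ‖v‖^2 ≤ 1 + ‖v‖^2 by linarith)
    rwa [Real.sqrt_sq (norm_nonneg v)] at h
  have hJ0 : 0 ≤ J := by linarith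
  have hmono := integral_mono_of_nonneg (f := fun w : E3 => ‖v - w‖ ^ γ * Real.exp (-δ * ‖w‖^2))
    (g := fun w : E3 => (J ^ γ * Real.exp (γ^2/(2*δ))) * Real.exp (-(δ/2) * ‖w‖^2))
    (Filter.Eventually.of_forall fun w => by positivity)
    (hI2int.const_mul _)
    (Filter.Eventually.of_forall fun w => ?_)
  · refine hmono.trans ?_
    rw [integral_const_mul]
    have : J ^ γ * Real.exp (γ^2/(2*δ)) * I2 = (Real.exp (γ^2/(2*δ)) * I2) * J ^ γ := by ring
    rw [← hI2, this]
    apply mul_le_mul_of_nonneg_right (le_max_right _ _) (Real.rpow_nonneg hJ0 _)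
  · -- pointwise bound
    have h1 : ‖v - w‖ ≤ J * (1 + ‖w‖) := by
      have ht := norm_sub_le v w
      nlinarith [norm_nonneg w]
    have h2 : ‖v - w‖ ^ γ ≤ J ^ γ * (1 + ‖w‖) ^ γ := by
      rw [← Real.mul_rpow hJ0 (by positivity)]
      exact Real.rpow_le_rpow (norm_nonneg _) h1 hγ0
    have h3 : (1 + ‖w‖) ^ γ ≤ Real.exp (γ * ‖w‖) := by
      calc (1 + ‖w‖) ^ γ ≤ Real.exp ‖w‖ ^ γ :=
            Real.rpow_le_rpow (by positivity) (by linarith [Real.add_one_le_exp ‖w‖]) hγ0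
        _ = Real.exp (‖w‖ * γ) := (Real.exp_mul _ _).symm
        _ = Real.exp (γ * ‖w‖) := by rw [mul_comm]
    have h4 : Real.exp (γ * ‖w‖) * Real.exp (-δ * ‖w‖^2)
        ≤ Real.exp (γ^2/(2*δ)) * Real.exp (-(δ/2) * ‖w‖^2) := by
      rw [← Real.exp_add, ← Real.exp_add, Real.exp_le_exp]
      have h2d : (0:ℝ) < 2*δ := by linarith
      rw [← mul_le_mul_iff_of_pos_right h2d]
      have e : (γ^2/(2*δ) + -(δ/2) * ‖w‖^2) * (2*δ) = γ^2 + -δ*δ*‖w‖^2 := by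
        field_simp
      rw [e]
      nlinarith [sq_nonneg (γ - δ * ‖w‖)]
    calc ‖v - w‖ ^ γ * Real.exp (-δ * ‖w‖^2)
        ≤ (J ^ γ * Real.exp (γ * ‖w‖)) * Real.exp (-δ * ‖w‖^2) := by
          apply mul_le_mul_of_nonneg_right _ (Real.exp_pos _).le
          exact h2.trans (mul_le_mul_of_nonneg_left h3 (Real.rpow_nonneg hJ0 _))
      _ = J ^ γ * (Real.exp (γ * ‖w‖) * Real.exp (-δ * ‖w‖^2)) := by ring
      _ ≤ J ^ γ * (Real.exp (γ^2/(2*δ)) * Real.exp (-(δ/2) * ‖w‖^2)) :=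
          mul_le_mul_of_nonneg_left h4 (Real.rpow_nonneg hJ0 _)
      _ = (J ^ γ * Real.exp (γ^2/(2*δ))) * Real.exp (-(δ/2) * ‖w‖^2) := by ring

set_option maxHeartbeats 1000000 in
lemma key_neg (γ : ℝ) (hγ : -3 < γ) (hγ0 : γ < 0) (δ : ℝ) (hδ : 0 < δ) :
    ∃ C > (0:ℝ), ∀ v : E3,
      (∫ w, ‖v - w‖ ^ γ * Real.exp (-δ * ‖w‖^2)) ≤ C * Real.sqrt (1 + ‖v‖^2) ^ γ := by
  set Iδ : ℝ := ∫ w : E3, Real.exp (-δ * ‖w‖^2) with hIδ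
  have hIδint : Integrable (fun w : E3 => Real.exp (-δ * ‖w‖^2)) := gauss_int δ hδ
  have hIδ0 : 0 ≤ Iδ := integral_nonneg fun w => (Real.exp_pos _).le
  set κ : ℝ := ∫ u in ball (0:E3) 1, ‖u‖^γ with hκ
  have hκ0 : 0 ≤ κ :=
    setIntegral_nonneg measurableSet_ball fun x _ => Real.rpow_nonneg (norm_nonneg _) _
  set B : ℝ := (volume (ball (0:E3) 1)).toReal with hB
  have hB0 : 0 ≤ B := ENNReal.toReal_nonneg
  set m : ℝ := min 1 (δ/12) with hm
  set C1 : ℝ := Real.exp (δ/4) * (κ + B) * (m⁻¹)^3 with hC1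
  have hC10 : 0 ≤ C1 :=
    mul_nonneg (mul_nonneg (Real.exp_pos _).le (by linarith)) (by positivity)
  have hC20 : 0 ≤ Iδ / (2:ℝ)^γ := by positivity
  refine ⟨C1 + Iδ / (2:ℝ)^γ + 1, by linarith, fun v => ?_⟩
  set J : ℝ := Real.sqrt (1 + ‖v‖^2) with hJ
  have hJ1 : 1 ≤ J := by
    rw [hJ]
    rw [show (1:ℝ) ≤ √(1 + ‖v‖ ^ 2) ↔ Real.sqrt 1 ≤ √(1 + ‖v‖ ^ 2) by rw [Real.sqrt_one]]
    exact Real.sqrt_le_sqrt (by nlinarith [sq_nonneg ‖v‖])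
  have hJpos : 0 < J := lt_of_lt_of_le one_pos hJ1
  have hJsq : J^2 = 1 + ‖v‖^2 := Real.sq_sqrt (by positivity)
  set r : ℝ := J/2 with hr'
  have hr : 0 < r := by positivity
  set A : ℝ := Real.exp (δ/4 - (δ/4)*‖v‖^2) with hA
  have hA0 : 0 ≤ A := (Real.exp_pos _).le
  set h : E3 → ℝ := (ball (0:E3) r).indicator (fun u => ‖u‖^γ) with hh
  have hhint : Integrable h :=
    (integrable_indicator_iff measurableSet_ball).2 (intOn_ball γ hγ hγ0 r hr)
  set g1 : E3 → ℝ := fun w => A * h (v - w) with hg1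
  have hg1int : Integrable g1 := (hhint.comp_sub_left v).const_mul A
  set g2 : E3 → ℝ := ((ball v r)ᶜ).indicator (fun w => r^γ * Real.exp (-δ * ‖w‖^2)) with hg2
  have hg2int : Integrable g2 := ((hIδint.const_mul _).indicator measurableSet_ball.compl)
  have hJγpos : 0 < J^γ := Real.rpow_pos_of_pos hJpos γ
  -- pointwise bound
  have hpt : ∀ w : E3, ‖v - w‖ ^ γ * Real.exp (-δ * ‖w‖^2) ≤ g1 w + g2 w := by
    intro w
    by_cases hw : w ∈ ball v r
    · have hvw : ‖v - w‖ < r := by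
        rw [mem_ball, dist_eq_norm] at hw
        rwa [norm_sub_rev] at hw
      have e1 : g1 w = A * ‖v - w‖^γ := by
        simp only [hg1, hh]
        rw [indicator_of_mem (mem_ball_zero_iff.2 hvw)]
      have e2 : g2 w = 0 := by
        simp only [hg2]
        rw [indicator_of_notMem (Set.notMem_compl_iff.2 hw)]
      rw [e1, e2, add_zero]
      have hexp : Real.exp (-δ * ‖w‖^2) ≤ A := by
        rw [hA, Real.exp_le_exp]
        have htri : ‖v‖ ≤ ‖v - w‖ + ‖w‖ := by
          have := norm_add_le (v - w) w
          rwa [sub_add_cancel] at this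
        have hb2 : ‖v‖^2 ≤ 2*‖v - w‖^2 + 2*‖w‖^2 := by
          nlinarith [htri, sq_nonneg (‖v - w‖ - ‖w‖), norm_nonneg v, norm_nonneg (v - w),
            norm_nonneg w]
        have ha2 : ‖v - w‖^2 ≤ (J/2)^2 := by
          nlinarith [hvw, norm_nonneg (v - w), hr]
        have hfin : ‖v‖^2/4 - 1/4 ≤ ‖w‖^2 := by nlinarith [hb2, ha2, hJsq]
        nlinarith [mul_le_mul_of_nonneg_left hfin hδ.le]
      calc ‖v - w‖^γ * Real.exp (-δ * ‖w‖^2) ≤ ‖v - w‖^γ * A :=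
            mul_le_mul_of_nonneg_left hexp (Real.rpow_nonneg (norm_nonneg _) _)
        _ = A * ‖v - w‖^γ := mul_comm _ _
    · have hge : r ≤ ‖v - w‖ := by
        rw [mem_ball, dist_eq_norm] at hw
        push_neg at hw
        rwa [norm_sub_rev] at hw
      have e1 : g1 w = 0 := by
        simp only [hg1, hh]
        rw [indicator_of_notMem (mem_ball_zero_iff.not.2 (not_lt.2 hge)), mul_zero]
      have e2 : g2 w = r^γ * Real.exp (-δ * ‖w‖^2) := by
        simp only [hg2]
        rw [indicator_of_mem (Set.mem_compl hw)]
      rw [e1, e2, zero_add]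
      exact mul_le_mul_of_nonneg_right (Real.rpow_le_rpow_of_nonpos hr hge hγ0.le)
        (Real.exp_pos _).le
  have hmono := integral_mono_of_nonneg
    (f := fun w : E3 => ‖v - w‖ ^ γ * Real.exp (-δ * ‖w‖^2)) (g := fun w => g1 w + g2 w)
    (Filter.Eventually.of_forall fun w => by positivity)
    (hg1int.add hg2int)
    (Filter.Eventually.of_forall hpt)
  have hsum : ∫ w, (g1 w + g2 w) = (∫ w, g1 w) + ∫ w, g2 w := integral_add hg1int hg2int
  -- compute/bound ∫ g1
  have hint_g1 : ∫ w, g1 w = A * ∫ u in ball (0:E3) r, ‖u‖^γ := by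
    rw [hg1, integral_const_mul, integral_sub_left_eq_self h volume v, hh,
      integral_indicator measurableSet_ball]
  have hκr : ∫ u in ball (0:E3) r, ‖u‖^γ ≤ κ + B * r^3 := by
    rw [← integral_inter_add_diff measurableSet_ball (intOn_ball γ hγ hγ0 r hr)]
    have h1 : ∫ u in ball (0:E3) r ∩ ball (0:E3) 1, ‖u‖^γ ≤ κ := by
      apply setIntegral_mono_set (intOn_ball γ hγ hγ0 1 one_pos)
        (Filter.Eventually.of_forall fun x => Real.rpow_nonneg (norm_nonneg _) _)
        (HasSubset.Subset.eventuallyLE inter_subset_right)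
    have h2 : ∫ u in ball (0:E3) r \ ball (0:E3) 1, ‖u‖^γ ≤ B * r^3 := by
      have hmeas : volume (ball (0:E3) r \ ball (0:E3) 1) < ⊤ :=
        lt_of_le_of_lt (measure_mono diff_subset) measure_ball_lt_top
      calc ∫ u in ball (0:E3) r \ ball (0:E3) 1, ‖u‖^γ
          ≤ ∫ _ in ball (0:E3) r \ ball (0:E3) 1, (1:ℝ) := by
            apply setIntegral_mono_on ((intOn_ball γ hγ hγ0 r hr).mono_set diff_subset)
              (integrableOn_const hmeas.ne)
              (measurableSet_ball.diff measurableSet_ball)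
            intro x hx
            have hx1 : 1 ≤ ‖x‖ := by
              have := hx.2
              rw [mem_ball_zero_iff, not_lt] at this
              exact this
            calc ‖x‖^γ ≤ 1^γ := Real.rpow_le_rpow_of_nonpos one_pos hx1 hγ0.le
              _ = 1 := Real.one_rpow γ
        _ = (volume (ball (0:E3) r \ ball (0:E3) 1)).toReal := by
            rw [setIntegral_const]; simp [Measure.real]
        _ ≤ (volume (ball (0:E3) r)).toReal :=
            ENNReal.toReal_mono measure_ball_lt_top.ne (measure_mono diff_subset)
        _ = B * r^3 := by
            rw [Measure.addHaar_ball _ _ hr.le, finrank_euclideanSpace]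
            simp [hB, ENNReal.toReal_mul, ENNReal.toReal_ofReal (by positivity : (0:ℝ) ≤ r^3), mul_comm]
    linarith
  -- bound ∫ g2
  have hint_g2 : ∫ w, g2 w ≤ r^γ * Iδ := by
    rw [hg2, integral_indicator measurableSet_ball.compl, integral_const_mul]
    apply mul_le_mul_of_nonneg_left _ (Real.rpow_nonneg hr.le _)
    exact setIntegral_le_integral hIδint (Filter.Eventually.of_forall fun w => (Real.exp_pos _).le)
  -- near bound
  have hnear : A * (κ + B * r^3) ≤ C1 * J^γ := by
    have hs : A * (κ + B * r^3) * J^(-γ) ≤ C1 := by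
      have e1 : J^(-γ) ≤ J^(3:ℕ) := by
        rw [← Real.rpow_natCast J 3]
        exact Real.rpow_le_rpow_of_exponent_le hJ1 (by push_cast; linarith)
      have hJ3 : (1:ℝ) ≤ J^(3:ℕ) := one_le_pow₀ hJ1
      have hr3 : r^(3:ℕ) ≤ J^(3:ℕ) := pow_le_pow_left₀ hr.le (by rw [hr']; linarith) 3
      have e2 : κ + B * r^3 ≤ (κ + B) * J^(3:ℕ) := by nlinarith
      have hstep : A * (κ + B * r^3) * J^(-γ) ≤ A * ((κ + B) * J^(3:ℕ)) * J^(3:ℕ) := by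
        apply mul_le_mul (mul_le_mul_of_nonneg_left e2 hA0) e1
          (Real.rpow_nonneg hJpos.le _) (by positivity)
      refine hstep.trans ?_
      have eA : A = Real.exp (δ/4) * Real.exp (-(δ/4)*‖v‖^2) := by
        rw [hA, ← Real.exp_add]; ring_nf
      have eJ : ((1 + ‖v‖^2):ℝ)^(3:ℕ) = (J^(3:ℕ)) * (J^(3:ℕ)) := by
        rw [← hJsq]; ring
      calc A * ((κ + B) * J^(3:ℕ)) * J^(3:ℕ)
          = (Real.exp (δ/4) * (κ + B)) * ((1 + ‖v‖^2)^(3:ℕ) * Real.exp (-(δ/4)*‖v‖^2)) := by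
            rw [eA, eJ]; ring
        _ ≤ (Real.exp (δ/4) * (κ + B)) * (m⁻¹)^3 := by
            apply mul_le_mul_of_nonneg_left (poly_exp δ hδ _ (sq_nonneg _))
              (mul_nonneg (Real.exp_pos _).le (by linarith))
        _ = C1 := by rw [hC1]
    have h := mul_le_mul_of_nonneg_right hs hJγpos.le
    rwa [mul_assoc, ← Real.rpow_add hJpos, neg_add_cancel, Real.rpow_zero, mul_one] at h
  -- far bound
  have hfar : r^γ * Iδ = (Iδ / (2:ℝ)^γ) * J^γ := by
    rw [hr', Real.div_rpow hJpos.le (by norm_num)]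
    ring
  calc (∫ w, ‖v - w‖ ^ γ * Real.exp (-δ * ‖w‖^2))
      ≤ ∫ w, (g1 w + g2 w) := hmono
    _ = (∫ w, g1 w) + ∫ w, g2 w := hsum
    _ ≤ A * (κ + B * r^3) + r^γ * Iδ := by
        rw [hint_g1]
        have := mul_le_mul_of_nonneg_left hκr hA0
        linarith
    _ ≤ C1 * J^γ + (Iδ / (2:ℝ)^γ) * J^γ := by rw [← hfar] at *; linarith [hnear]
    _ ≤ (C1 + Iδ / (2:ℝ)^γ + 1) * J^γ := by nlinarith [hJγpos]


lemma key_conv (γ : ℝ) (hγ : -3 < γ) (δ : ℝ) (hδ : 0 < δ) :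
    ∃ C > (0:ℝ), ∀ v : E3,
      (∫ w, ‖v - w‖ ^ γ * Real.exp (-δ * ‖w‖^2)) ≤ C * Real.sqrt (1 + ‖v‖^2) ^ γ := by
  rcases lt_or_ge γ 0 with h | h
  · exact key_neg γ hγ h δ hδ
  · exact key_nonneg γ h δ hδ

/-- `∫ |v-w|^γ e^{-δ|w|²} dw ≲ ⟨v⟩^γ` for `γ > -3`, `δ > 0`. -/
theorem conv_gaussian_weight_bound (γ : ℝ) (hγ : -3 < γ) (δ : ℝ) (hδ : 0 < δ) :
    ∃ C > (0 : ℝ), ∀ v : V3,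
      (∫ w, en (v - w) ^ γ * Real.exp (-δ * en2 w)) ≤ C * jap v ^ γ := by
  obtain ⟨C, hC, hkey⟩ := key_conv γ hγ δ hδ
  refine ⟨C, hC, fun v => ?_⟩
  set T := (MeasurableEquiv.toLp 2 (Fin 3 → ℝ)).symm with hT
  set v' : E3 := T.symm v with hv'
  have happ : ∀ (x : E3) (i : Fin 3), T x i = x i := fun x i => rfl
  have happ' : ∀ i : Fin 3, v' i = v i := fun i => rfl
  have hnorm : ∀ x : E3, en (v - T x) = ‖v' - x‖ := by
    intro x
    rw [en, en2, EuclideanSpace.norm_eq]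
    congr 1
    refine Finset.sum_congr rfl fun i _ => ?_
    rw [Real.norm_eq_abs, sq_abs]
    rfl
  have hen2 : ∀ x : E3, en2 (T x) = ‖x‖^2 := by
    intro x
    rw [en2, EuclideanSpace.norm_eq, Real.sq_sqrt (by positivity)]
    exact Finset.sum_congr rfl fun i _ => by rw [Real.norm_eq_abs, sq_abs]; rfl
  have hjap : jap v = Real.sqrt (1 + ‖v'‖^2) := by
    rw [jap, en2, EuclideanSpace.norm_eq, Real.sq_sqrt (by positivity)]
    congr 2
    exact Finset.sum_congr rfl fun i _ => by rw [Real.norm_eq_abs, sq_abs]; rfl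
  have hint : (∫ w : V3, en (v - w) ^ γ * Real.exp (-δ * en2 w))
      = ∫ x : E3, ‖v' - x‖ ^ γ * Real.exp (-δ * ‖x‖^2) := by
    rw [← (EuclideanSpace.volume_preserving_symm_measurableEquiv_toLp (Fin 3)).integral_comp
      T.measurableEmbedding (fun w => en (v - w) ^ γ * Real.exp (-δ * en2 w))]
    refine integral_congr_ae (Filter.Eventually.of_forall fun x => ?_)
    show en (v - T x) ^ γ * Real.exp (-δ * en2 (T x)) = ‖v' - x‖ ^ γ * Real.exp (-δ * ‖x‖^2)
    rw [hnorm, hen2]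
  rw [hint, hjap]
  exact hkey v'

end
end

section
/- Let $-3 < \gamma < 0$, $\mu(v) = (2\pi)^{-3/2}e^{-|v|^2/2}$, $a_{ij}(v) = (\delta_{ij}|v|^2 - v_i v_j)|v|^\gamma$, and $\bar{a}_{ij} = a_{ij} * \mu$. Then there exists a constant $C > 0$ such that for all $1 \le i,j \le 3$ and all $v \in \mathbb{R}^3$, $|\bar{a}_{ij}(v)| \le C \langle v\rangle^{\gamma+2}$. -/
noncomputable section

open MeasureTheory Real

/-! Since `|aᵢⱼ(u)| ≤ 2|u|^{γ+2}`, it suffices to bound `∫ |v-w|^p e^{-|w|²/2} dw` by `C⟨v⟩^p`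
for `p = γ + 2 > -3`. Split the integral at `|v-w| = 1`. Near the singularity `|w|² ≥ |v|²/2 - 1`,
so the Gaussian factor is `O(e^{-⟨v⟩²/4})`, which beats every power of `⟨v⟩`, and `|x|^p` is
integrable on the unit ball because `p > -3`. Away from it `|v-w|^p ≲ ⟨v-w⟩^p`, and Peetre's
inequality `⟨v-w⟩^p ≤ 2^{|p|/2} ⟨v⟩^p ⟨w⟩^{|p|}` leaves a Gaussian moment in `w`. -/

lemma en2_nonneg (v : V3) : 0 ≤ en2 v :=
  Finset.sum_nonneg fun _ _ => sq_nonneg _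

lemma en_nonneg (v : V3) : 0 ≤ en v := Real.sqrt_nonneg _

lemma sq_en (v : V3) : en v ^ 2 = en2 v := Real.sq_sqrt (en2_nonneg v)

lemma jap_pos (v : V3) : 0 < jap v := Real.sqrt_pos.2 (by linarith [en2_nonneg v])

lemma one_le_jap (v : V3) : 1 ≤ jap v :=
  Real.one_le_sqrt.2 (by linarith [en2_nonneg v])

lemma sq_jap (v : V3) : jap v ^ 2 = 1 + en2 v := Real.sq_sqrt (by linarith [en2_nonneg v])

lemma en_le_jap (v : V3) : en v ≤ jap v :=
  Real.sqrt_le_sqrt (by linarith [en2_nonneg v])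

lemma en2_neg (v : V3) : en2 (-v) = en2 v := by simp [en2]

lemma jap_neg (v : V3) : jap (-v) = jap v := by rw [jap, jap, en2_neg]

lemma abs_apply_le_en (v : V3) (i : Fin 3) : |v i| ≤ en v :=
  Real.abs_le_sqrt (Finset.single_le_sum (f := fun j => v j ^ 2) (fun _ _ => sq_nonneg _)
    (Finset.mem_univ i))

lemma norm_le_en (v : V3) : ‖v‖ ≤ en v :=
  (pi_norm_le_iff_of_nonneg (en_nonneg v)).2 fun i => abs_apply_le_en v i

lemma en2_add_le (a b : V3) : en2 (a + b) ≤ 2 * en2 a + 2 * en2 b := by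
  simp only [en2, Pi.add_apply, Finset.mul_sum, ← Finset.sum_add_distrib]
  exact Finset.sum_le_sum fun i _ => by nlinarith [sq_nonneg (a i - b i)]

lemma jap_add_le (a b : V3) : jap (a + b) ≤ √2 * jap a * jap b := by
  refine le_of_sq_le_sq ?_ (by positivity [jap_pos a, jap_pos b])
  rw [mul_pow, mul_pow, Real.sq_sqrt zero_le_two, sq_jap, sq_jap, sq_jap]
  nlinarith [en2_add_le a b, mul_nonneg (en2_nonneg a) (en2_nonneg b)]

lemma continuous_en2 : Continuous en2 :=
  continuous_finsetSum _ fun i _ => (continuous_apply i).pow 2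

lemma continuous_en : Continuous en := Real.continuous_sqrt.comp continuous_en2

lemma continuous_jap : Continuous jap :=
  Real.continuous_sqrt.comp (continuous_const.add continuous_en2)

lemma jap_sub_rpow_le (p : ℝ) (v w : V3) :
    jap (v - w) ^ p ≤ √2 ^ |p| * jap v ^ p * jap w ^ |p| := by
  have hv := jap_pos v
  have hw := jap_pos w
  rcases le_or_gt 0 p with hp | hp
  · have h : jap (v - w) ≤ √2 * jap v * jap w := by
      simpa [sub_eq_add_neg, jap_neg] using jap_add_le v (-w)
    rw [abs_of_nonneg hp, ← Real.mul_rpow (by positivity) hv.le,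
      ← Real.mul_rpow (by positivity) hw.le]
    exact Real.rpow_le_rpow (jap_pos _).le h hp
  · have h : jap v / (√2 * jap w) ≤ jap (v - w) := by
      rw [div_le_iff₀ (by positivity)]
      simpa [mul_assoc, mul_comm, mul_left_comm] using jap_add_le (v - w) w
    calc jap (v - w) ^ p ≤ (jap v / (√2 * jap w)) ^ p :=
          Real.rpow_le_rpow_of_nonpos (by positivity) h hp.le
      _ = √2 ^ |p| * jap v ^ p * jap w ^ |p| := by
          rw [abs_of_neg hp, Real.div_rpow hv.le (by positivity),
            Real.mul_rpow (by positivity) hw.le, Real.rpow_neg (by positivity),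
            Real.rpow_neg hw.le]
          field_simp

lemma en_rpow_le_of_one_le (p : ℝ) {x : V3} (hx : 1 ≤ en x) :
    en x ^ p ≤ √2 ^ |p| * jap x ^ p := by
  rcases le_or_gt 0 p with hp | hp
  · calc en x ^ p ≤ jap x ^ p := Real.rpow_le_rpow (en_nonneg x) (en_le_jap x) hp
      _ ≤ √2 ^ |p| * jap x ^ p := le_mul_of_one_le_left (by positivity [jap_pos x])
          (Real.one_le_rpow (by simp [Real.le_sqrt]) (abs_nonneg p))
  · have h : jap x / √2 ≤ en x := by
      rw [div_le_iff₀ (by positivity)]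
      refine le_of_sq_le_sq ?_ (by positivity [en_nonneg x])
      rw [mul_pow, Real.sq_sqrt zero_le_two, sq_jap, ← sq_en]
      nlinarith
    calc en x ^ p ≤ (jap x / √2) ^ p :=
          Real.rpow_le_rpow_of_nonpos (by positivity [jap_pos x]) h hp.le
      _ = √2 ^ |p| * jap x ^ p := by
          rw [abs_of_neg hp, Real.div_rpow (jap_pos x).le (by positivity),
            Real.rpow_neg (by positivity)]
          field_simp

lemma rpow_mul_exp_neg_mul_sq_le (q : ℝ) {b x : ℝ} (hb : 0 < b) (hx : 1 ≤ x) :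
    x ^ q * exp (-(b * x ^ 2)) ≤ exp (q ^ 2 / (4 * b)) := by
  have hlog0 : 0 ≤ log x := Real.log_nonneg hx
  have hlog : log x ≤ x := (Real.log_le_sub_one_of_pos (by linarith)).trans (by linarith)
  have hq : log x * q ≤ |q| * x :=
    calc log x * q ≤ log x * |q| := mul_le_mul_of_nonneg_left (le_abs_self q) hlog0
      _ ≤ |q| * x := by rw [mul_comm]; exact mul_le_mul_of_nonneg_left hlog (abs_nonneg q)
  rw [Real.rpow_def_of_pos (by linarith), ← Real.exp_add, Real.exp_le_exp,
    le_div_iff₀ (by positivity)]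
  nlinarith [sq_nonneg (2 * b * x - |q|), sq_abs q]

lemma integrable_exp_neg_mul_en2 {b : ℝ} (hb : 0 < b) :
    Integrable (fun w : V3 => exp (-(b * en2 w))) := by
  have h : (fun w : V3 => exp (-(b * en2 w))) = fun w => ∏ i, exp (-b * w i ^ 2) := by
    funext w
    rw [← Real.exp_sum]
    simp [en2, Finset.mul_sum]
  rw [h]
  exact Integrable.fintype_prod fun _ => integrable_exp_neg_mul_sq hb

lemma integrable_jap_rpow_mul_gauss (q : ℝ) :
    Integrable (fun w : V3 => jap w ^ q * exp (-en2 w / 2)) := by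
  refine ((integrable_exp_neg_mul_en2 (b := 1 / 4) (by norm_num)).const_mul
    (exp (q ^ 2) * exp (1 / 4))).mono' ?_ (ae_of_all _ fun w => ?_)
  · exact ((continuous_jap.measurable.pow_const q).mul
      (continuous_en2.neg.div_const 2).rexp.measurable).aestronglyMeasurable
  · have hsplit : exp (-en2 w / 2)
        = exp (-(1 / 4 * jap w ^ 2)) * (exp (1 / 4) * exp (-(1 / 4 * en2 w))) := by
      rw [← Real.exp_add, ← Real.exp_add, sq_jap]
      ring_nf
    have hdecay : jap w ^ q * exp (-(1 / 4 * jap w ^ 2)) ≤ exp (q ^ 2) := by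
      simpa using rpow_mul_exp_neg_mul_sq_le q (b := 1 / 4) (by norm_num) (one_le_jap w)
    rw [Real.norm_of_nonneg (mul_nonneg (Real.rpow_nonneg (jap_pos w).le q) (Real.exp_pos _).le)]
    calc jap w ^ q * exp (-en2 w / 2)
        = jap w ^ q * exp (-(1 / 4 * jap w ^ 2)) * (exp (1 / 4) * exp (-(1 / 4 * en2 w))) := by
          rw [hsplit, mul_assoc]
      _ ≤ exp (q ^ 2) * (exp (1 / 4) * exp (-(1 / 4 * en2 w))) :=
          mul_le_mul_of_nonneg_right hdecay (by positivity)
      _ = exp (q ^ 2) * exp (1 / 4) * exp (-(1 / 4 * en2 w)) := (mul_assoc _ _ _).symm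

lemma locallyIntegrable_en_rpow {p : ℝ} (hp : -3 < p) :
    LocallyIntegrable (fun x : V3 => en x ^ p) := by
  rcases le_or_gt 0 p with hp0 | hp0
  · exact (continuous_en.rpow_const fun _ => Or.inr hp0).locallyIntegrable
  refine locallyIntegrable_of_norm_le_rpow (C := 1) (α := -p) (by simp) (by simpa [neg_lt] using hp)
    (ae_of_all _ fun x => ?_) (continuous_en.measurable.pow_const p).aestronglyMeasurable
  rw [neg_neg, one_mul, Real.norm_of_nonneg (Real.rpow_nonneg (en_nonneg x) p)]
  rcases eq_or_ne x 0 with rfl | hx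
  · simp [en, en2]
  · exact Real.rpow_le_rpow_of_nonpos (norm_pos_iff.2 hx) (norm_le_en x) hp0.le

lemma integrable_indicator_en_lt_one_rpow {p : ℝ} (hp : -3 < p) :
    Integrable ({x : V3 | en x < 1}.indicator fun x => en x ^ p) := by
  refine (integrable_indicator_iff (measurableSet_lt continuous_en.measurable measurable_const)).2
    (((locallyIntegrable_en_rpow hp).integrableOn_isCompact (isCompact_closedBall 0 1)).mono_set
      fun x hx => ?_)
  exact mem_closedBall_zero_iff.2 ((norm_le_en x).trans (le_of_lt hx))

lemma exp_neg_en2_le_of_en_sub_lt_one (p : ℝ) {v w : V3} (h : en (v - w) < 1) :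
    exp (-en2 w / 2) ≤ exp (3 / 4 + p ^ 2) * jap v ^ p := by
  have hvw : en2 (v - w) < 1 := by
    rw [← sq_en]; nlinarith [en_nonneg (v - w)]
  have hv : en2 v ≤ 2 * en2 (v - w) + 2 * en2 w := by
    simpa using en2_add_le (v - w) w
  have hdecay : (jap v ^ p)⁻¹ * exp (-(1 / 4 * jap v ^ 2)) ≤ exp (p ^ 2) := by
    simpa [Real.rpow_neg (jap_pos v).le] using
      rpow_mul_exp_neg_mul_sq_le (-p) (b := 1 / 4) (by norm_num) (one_le_jap v)
  rw [inv_mul_le_iff₀ (Real.rpow_pos_of_pos (jap_pos v) p), sq_jap] at hdecay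
  calc exp (-en2 w / 2) ≤ exp (3 / 4) * exp (-(1 / 4 * (1 + en2 v))) := by
        rw [← Real.exp_add, Real.exp_le_exp]; linarith
    _ ≤ exp (3 / 4) * (jap v ^ p * exp (p ^ 2)) :=
        mul_le_mul_of_nonneg_left hdecay (Real.exp_pos _).le
    _ = exp (3 / 4 + p ^ 2) * jap v ^ p := by rw [Real.exp_add]; ring

lemma en_sub_rpow_mul_gauss_le (p : ℝ) (v w : V3) :
    en (v - w) ^ p * exp (-en2 w / 2) ≤
      exp (3 / 4 + p ^ 2) * jap v ^ p * {x : V3 | en x < 1}.indicator (fun x => en x ^ p) (v - w)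
        + √2 ^ |p| * √2 ^ |p| * jap v ^ p * (jap w ^ |p| * exp (-en2 w / 2)) := by
  by_cases hnear : en (v - w) < 1
  · rw [Set.indicator_of_mem (show v - w ∈ {x : V3 | en x < 1} from hnear)]
    have hfar : 0 ≤ √2 ^ |p| * √2 ^ |p| * jap v ^ p * (jap w ^ |p| * exp (-en2 w / 2)) := by
      positivity [jap_pos v, jap_pos w]
    calc en (v - w) ^ p * exp (-en2 w / 2)
        ≤ en (v - w) ^ p * (exp (3 / 4 + p ^ 2) * jap v ^ p) :=
          mul_le_mul_of_nonneg_left (exp_neg_en2_le_of_en_sub_lt_one p hnear)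
            (Real.rpow_nonneg (en_nonneg _) p)
      _ ≤ _ := by linarith
  · rw [Set.indicator_of_notMem (show v - w ∉ {x : V3 | en x < 1} from hnear), mul_zero, zero_add]
    have h : en (v - w) ^ p ≤ √2 ^ |p| * jap v ^ p * jap w ^ |p| * √2 ^ |p| :=
      calc en (v - w) ^ p ≤ √2 ^ |p| * jap (v - w) ^ p := en_rpow_le_of_one_le p (not_lt.1 hnear)
        _ ≤ √2 ^ |p| * (√2 ^ |p| * jap v ^ p * jap w ^ |p|) :=
          mul_le_mul_of_nonneg_left (jap_sub_rpow_le p v w) (by positivity)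
        _ = _ := by ring
    calc en (v - w) ^ p * exp (-en2 w / 2)
        ≤ √2 ^ |p| * jap v ^ p * jap w ^ |p| * √2 ^ |p| * exp (-en2 w / 2) :=
          mul_le_mul_of_nonneg_right h (Real.exp_pos _).le
      _ = _ := by ring

lemma integral_en_sub_rpow_mul_gauss_le {p : ℝ} (hp : -3 < p) :
    ∃ C, ∀ v : V3, Integrable (fun w => en (v - w) ^ p * exp (-en2 w / 2)) ∧
      ∫ w, en (v - w) ^ p * exp (-en2 w / 2) ≤ C * jap v ^ p := by
  set S := {x : V3 | en x < 1}.indicator fun x => en x ^ p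
  have hS : Integrable S := integrable_indicator_en_lt_one_rpow hp
  have hM := integrable_jap_rpow_mul_gauss |p|
  refine ⟨exp (3 / 4 + p ^ 2) * (∫ x, S x)
    + √2 ^ |p| * √2 ^ |p| * ∫ w, jap w ^ |p| * exp (-en2 w / 2), fun v => ?_⟩
  have hdom : Integrable fun w => exp (3 / 4 + p ^ 2) * jap v ^ p * S (v - w)
      + √2 ^ |p| * √2 ^ |p| * jap v ^ p * (jap w ^ |p| * exp (-en2 w / 2)) :=
    ((hS.comp_sub_left v).const_mul _).add (hM.const_mul _)
  have hint : Integrable fun w => en (v - w) ^ p * exp (-en2 w / 2) := by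
    refine hdom.mono' ?_ (ae_of_all _ fun w => ?_)
    · exact ((continuous_en.comp (continuous_const.sub continuous_id)).measurable.pow_const p
        |>.mul (continuous_en2.neg.div_const 2).rexp.measurable).aestronglyMeasurable
    · rw [Real.norm_of_nonneg (mul_nonneg (Real.rpow_nonneg (en_nonneg _) p) (Real.exp_pos _).le)]
      exact en_sub_rpow_mul_gauss_le p v w
  refine ⟨hint, ?_⟩
  calc ∫ w, en (v - w) ^ p * exp (-en2 w / 2)
      ≤ ∫ w, exp (3 / 4 + p ^ 2) * jap v ^ p * S (v - w)
          + √2 ^ |p| * √2 ^ |p| * jap v ^ p * (jap w ^ |p| * exp (-en2 w / 2)) :=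
        integral_mono hint hdom fun w => en_sub_rpow_mul_gauss_le p v w
    _ = _ := by
        rw [integral_add ((hS.comp_sub_left v).const_mul _) (hM.const_mul _), integral_const_mul,
          integral_const_mul, integral_sub_left_eq_self S volume v]
        ring

lemma abs_aK_le (γ : ℝ) (i j : Fin 3) (u : V3) : |aK γ i j u| ≤ 2 * en u ^ (γ + 2) := by
  have hδ : |if i = j then en2 u else 0| ≤ en2 u := by
    split_ifs
    · exact (abs_of_nonneg (en2_nonneg u)).le
    · simpa using en2_nonneg u
  have hprod : |u i * u j| ≤ en2 u := by
    rw [abs_mul, ← sq_en, sq]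
    exact mul_le_mul (abs_apply_le_en u i) (abs_apply_le_en u j) (abs_nonneg _) (en_nonneg u)
  have hpow : en2 u * en u ^ γ ≤ en u ^ (γ + 2) := by
    rcases (en_nonneg u).eq_or_lt with h0 | hpos
    · rw [← sq_en, ← h0]; simpa using Real.rpow_nonneg le_rfl (γ + 2)
    · rw [Real.rpow_add hpos, Real.rpow_two, sq_en, mul_comm]
  rw [aK, abs_mul, abs_of_nonneg (Real.rpow_nonneg (en_nonneg u) γ)]
  calc |(if i = j then en2 u else 0) - u i * u j| * en u ^ γ ≤ 2 * en2 u * en u ^ γ :=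
        mul_le_mul_of_nonneg_right ((abs_sub _ _).trans (by linarith))
          (Real.rpow_nonneg (en_nonneg u) γ)
    _ ≤ 2 * en u ^ (γ + 2) := by rw [mul_assoc]; exact mul_le_mul_of_nonneg_left hpow zero_le_two

theorem abar_bound_general (γ : ℝ) (hγ1 : -3 < γ) :
    ∃ C > (0 : ℝ), ∀ (i j : Fin 3) (v : V3),
      |abar γ i j v| ≤ C * jap v ^ (γ + 2) := by
  obtain ⟨C, hC⟩ := integral_en_sub_rpow_mul_gauss_le (p := γ + 2) (by linarith)
  set c : ℝ := (2 * π) ^ (-(3 : ℝ) / 2)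
  have hc : 0 < c := by positivity
  refine ⟨2 * c * max C 1, by positivity, fun i j v => ?_⟩
  obtain ⟨hint, hle⟩ := hC v
  have hkernel (w : V3) : |aK γ i j (v - w) * maxw w|
      ≤ 2 * c * (en (v - w) ^ (γ + 2) * exp (-en2 w / 2)) := by
    rw [abs_mul, maxw, abs_of_pos (mul_pos hc (Real.exp_pos _))]
    nlinarith [abs_aK_le γ i j (v - w), mul_pos hc (Real.exp_pos (-en2 w / 2))]
  calc |abar γ i j v| = |∫ w, aK γ i j (v - w) * maxw w| := rfl
    _ ≤ ∫ w, |aK γ i j (v - w) * maxw w| := abs_integral_le_integral_abs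
    _ ≤ ∫ w, 2 * c * (en (v - w) ^ (γ + 2) * exp (-en2 w / 2)) :=
        integral_mono_of_nonneg (ae_of_all _ fun _ => abs_nonneg _) (hint.const_mul _)
          (ae_of_all _ hkernel)
    _ = 2 * c * ∫ w, en (v - w) ^ (γ + 2) * exp (-en2 w / 2) := integral_const_mul _ _
    _ ≤ 2 * c * (max C 1 * jap v ^ (γ + 2)) :=
        mul_le_mul_of_nonneg_left (hle.trans (mul_le_mul_of_nonneg_right (le_max_left _ _)
          (Real.rpow_nonneg (jap_pos v).le _))) (by positivity)
    _ = 2 * c * max C 1 * jap v ^ (γ + 2) := by ring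

/-- `|ā_{ij}(v)| ≲ ⟨v⟩^{γ+2}`. -/
theorem abar_bound (γ : ℝ) (hγ1 : -3 < γ) (hγ2 : γ < 0) :
    ∃ C > (0 : ℝ), ∀ (i j : Fin 3) (v : V3),
      |abar γ i j v| ≤ C * jap v ^ (γ + 2) :=
  abar_bound_general γ hγ1
end
end
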